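/- If G is a connected graph on at least 3 vertices and T_2(G) is well-covered, then the girth of G is at most 4 (i.e., G contains a cycle of length 3 or 4). -/

import Mathlib

/-!
Suppose `G` has girth at least 5 and pick a path `u - v - w` (it exists as `G` is connected with
at least three vertices). Regard edges of `G` as tokens of `T₂(G)`; since `G` has no triangle,
any set of such edge-tokens is independent. Let `X` be the set of edges with exactly one end in
`{u, v, w}`, and put `S₁ = X ∪ {uv, vw}`, `S₂ = X ∪ {uw}`. As `v` is the only common neighbour
of `u` and `w`, `S₂` is independent too, and every token in or adjacent to `S₁` is in or
adjacent to `S₂`. In a well-covered graph this forces `|S₁| ≤ |S₂|`: extend `S₂` to a maximal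
independent set `T`; then `(T \ S₂) ∪ S₁` is independent and larger than `T`.
-/

/-- The `k`-token graph of `G`: vertices are the `k`-subsets of `V(G)`, two subsets
adjacent iff their symmetric difference is an edge of `G`. -/
def tokenGraph {V : Type*} [DecidableEq V] (G : SimpleGraph V) (k : ℕ) :
    SimpleGraph {s : Finset V // s.card = k} where
  Adj A B := ∃ a b, G.Adj a b ∧ symmDiff A.1 B.1 = {a, b}
  symm := by
    constructor
    rintro A B ⟨a, b, hab, h⟩
    exact ⟨b, a, hab.symm, by rw [symmDiff_comm, h, Finset.pair_comm]⟩
  loopless := by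
    constructor
    rintro A ⟨a, b, hab, h⟩
    rw [symmDiff_self] at h
    exact (Finset.insert_ne_empty a {b}) (by simpa using h.symm)

/-- A set of vertices is independent if no two of its members are adjacent. -/
def IndepSet {W : Type*} (G : SimpleGraph W) (s : Set W) : Prop :=
  s.Pairwise fun a b => ¬ G.Adj a b

/-- The independence number of a finite graph. -/
noncomputable def indepNum {W : Type*} [Fintype W] (G : SimpleGraph W) : ℕ := by
  classical exact Finset.univ.sup fun s : Finset W => if IndepSet G ↑s then s.card else 0

/-- A graph is well-covered if all its maximal independent sets have the same cardinality. -/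
def WellCovered {W : Type*} (G : SimpleGraph W) : Prop :=
  ∀ s t : Set W, Maximal (IndepSet G) s → Maximal (IndepSet G) t → s.ncard = t.ncard

section WellCovered

variable {W : Type*}

def closedNbhd (H : SimpleGraph W) (S : Set W) : Set W :=
  S ∪ {x | ∃ s ∈ S, H.Adj x s}

theorem WellCovered.ncard_le_of_closedNbhd_subset [Finite W] {H : SimpleGraph W}
    (hwc : WellCovered H) {S₁ S₂ : Set W} (h₁ : IndepSet H S₁) (h₂ : IndepSet H S₂)
    (hN : closedNbhd H S₁ ⊆ closedNbhd H S₂) : S₁.ncard ≤ S₂.ncard := by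
  obtain ⟨T₂, hST₂, hT₂⟩ := Finite.exists_le_maximal h₂
  have hM : ∀ m ∈ T₂ \ S₂, m ∉ closedNbhd H S₁ := by
    rintro m ⟨hmT, hmS⟩ hmN
    rcases hN hmN with hm | ⟨s, hs, hms⟩
    · exact hmS hm
    · exact hT₂.prop hmT (hST₂ hs) (fun h => hmS (h ▸ hs)) hms
  have hI : IndepSet H (T₂ \ S₂ ∪ S₁) :=
    Set.pairwise_union.mpr ⟨hT₂.prop.mono Set.sdiff_subset, h₁, fun m hm s hs _ =>
      ⟨fun h => hM m hm (Or.inr ⟨s, hs, h⟩), fun h => hM m hm (Or.inr ⟨s, hs, h.symm⟩)⟩⟩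
  obtain ⟨T₁, hT₁sub, hT₁⟩ := Finite.exists_le_maximal hI
  have hdisj : Disjoint (T₂ \ S₂) S₁ :=
    Set.disjoint_left.mpr fun m hm hs => hM m hm (Or.inl hs)
  have hcard₁ : (T₂ \ S₂).ncard + S₁.ncard ≤ T₁.ncard :=
    Set.ncard_union_eq hdisj ▸ Set.ncard_le_ncard hT₁sub
  have hcard₂ : (T₂ \ S₂).ncard + S₂.ncard = T₂.ncard := Set.ncard_sdiff_add_ncard_of_subset hST₂
  have := hwc T₁ T₂ hT₁ hT₂
  omega

end WellCovered

namespace SimpleGraph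

variable {V : Type*} {G : SimpleGraph V}

lemma egirth_le_three {a b c : V} (hab : G.Adj a b) (hbc : G.Adj b c) (hca : G.Adj c a) :
    G.egirth ≤ 3 := by
  have : (Walk.cons hab (.cons hbc (.cons hca .nil))).IsCycle :=
    { edges_nodup := by aesop
      ne_nil := by aesop
      support_nodup := by aesop }
  simpa using egirth_le_length this

lemma egirth_le_four {a b c d : V} (hab : G.Adj a b) (hbc : G.Adj b c) (hcd : G.Adj c d)
    (hda : G.Adj d a) (hac : a ≠ c) (hbd : b ≠ d) : G.egirth ≤ 4 := by
  have : (Walk.cons hab (.cons hbc (.cons hcd (.cons hda .nil)))).IsCycle :=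
    { edges_nodup := by aesop
      ne_nil := by aesop
      support_nodup := by aesop }
  simpa using egirth_le_length this

lemma Connected.exists_adj_adj_of_three_le_card [Fintype V] (hG : G.Connected)
    (hn : 3 ≤ Fintype.card V) : ∃ v u w, u ≠ w ∧ G.Adj v u ∧ G.Adj v w := by
  classical
  have : Nontrivial V := Fintype.one_lt_card_iff_nontrivial.mp (by omega)
  obtain ⟨u, v, huv⟩ : ∃ u v, G.Adj u v :=
    ⟨_, _, (hG.preconnected.exists_adj_of_nontrivial (Classical.arbitrary V)).choose_spec⟩
  obtain ⟨x, -, hx⟩ := Finset.exists_mem_notMem_of_card_lt_card (s := {u, v})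
    (t := Finset.univ) (Finset.card_le_two.trans_lt (by rw [Finset.card_univ]; omega))
  -- a walk from `u` to the third vertex `x` leaves `{u, v}` through a new neighbour of `u` or `v`
  obtain ⟨d, -, hd, hdx⟩ := (hG.preconnected u x).some.exists_boundary_dart
    {u, v} (by simp) (by simpa using hx)
  simp only [Set.mem_insert_iff, Set.mem_singleton_iff, not_or] at hd hdx
  rcases hd with hd | hd
  · exact ⟨u, v, d.snd, Ne.symm hdx.2, huv, hd ▸ d.adj⟩
  · exact ⟨v, u, d.snd, Ne.symm hdx.1, huv.symm, hd ▸ d.adj⟩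

lemma pair_eq_of_adj_of_adj [DecidableEq V] {u v w t c d : V} (hnuw : ¬ G.Adj u w)
    (ht : t ∈ ({u, v, w} : Set V)) (hc : c ∈ ({u, v, w} : Set V)) (hd : d ∈ ({u, v, w} : Set V))
    (htc : t ≠ c) (htd : G.Adj t d) (hcd : G.Adj c d) : ({t, c} : Finset V) = {u, w} := by
  simp only [Set.mem_insert_iff, Set.mem_singleton_iff] at ht hc hd
  rcases ht with rfl | rfl | rfl <;> rcases hc with rfl | rfl | rfl <;>
    rcases hd with rfl | rfl | rfl <;>
    first | rfl | exact Finset.pair_comm _ _ | simp_all [G.adj_comm]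

end SimpleGraph

theorem Finset.pair_eq_pair_iff {α : Type*} [DecidableEq α] {a b c d : α} :
    ({a, b} : Finset α) = {c, d} ↔ a = c ∧ b = d ∨ a = d ∧ b = c := by
  rw [← Finset.coe_inj, Finset.coe_pair, Finset.coe_pair, Set.pair_eq_pair_iff]

section TokenGraph

variable {V : Type*} [DecidableEq V] {G : SimpleGraph V}

lemma SimpleGraph.adj_of_pair_eq {a b c d : V} (h : ({a, b} : Finset V) = {c, d})
    (hcd : G.Adj c d) : G.Adj a b := by
  rcases Finset.pair_eq_pair_iff.mp h with ⟨rfl, rfl⟩ | ⟨rfl, rfl⟩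
  exacts [hcd, hcd.symm]

theorem tokenGraph_two_adj_iff {A B : {s : Finset V // s.card = 2}} :
    (tokenGraph G 2).Adj A B ↔
      ∃ x a b, x ≠ a ∧ x ≠ b ∧ G.Adj a b ∧ A.1 = {x, a} ∧ B.1 = {x, b} := by
  constructor
  · rintro ⟨a, b, hab, h⟩
    have hsymm : A.1 \ B.1 ∪ B.1 \ A.1 = {a, b} := h
    have hA := Finset.card_sdiff_add_card_inter A.1 B.1
    have hB := Finset.card_sdiff_add_card_inter B.1 A.1
    have hs := congrArg Finset.card hsymm
    rw [Finset.card_union_of_disjoint disjoint_sdiff_sdiff, Finset.card_pair hab.ne] at hs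
    rw [A.2] at hA
    rw [B.2, Finset.inter_comm] at hB
    -- `A \ B` and `B \ A` have equal size and together two elements, so `A ∩ B` is a singleton
    obtain ⟨a', ha'⟩ := Finset.card_eq_one.mp (by omega : (A.1 \ B.1).card = 1)
    obtain ⟨b', hb'⟩ := Finset.card_eq_one.mp (by omega : (B.1 \ A.1).card = 1)
    obtain ⟨x, hx⟩ := Finset.card_eq_one.mp (by omega : (A.1 ∩ B.1).card = 1)
    have hxa : x ≠ a' := by
      have := Finset.disjoint_sdiff_inter A.1 B.1
      rw [ha', hx, Finset.disjoint_singleton] at this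
      exact this.symm
    have hxb : x ≠ b' := by
      have := Finset.disjoint_sdiff_inter B.1 A.1
      rw [hb', Finset.inter_comm, hx, Finset.disjoint_singleton] at this
      exact this.symm
    refine ⟨x, a', b', hxa, hxb, G.adj_of_pair_eq ?_ hab, ?_, ?_⟩
    · rw [← hsymm, ha', hb']; rfl
    · rw [← Finset.sdiff_union_inter A.1 B.1, ha', hx, Finset.union_comm]; rfl
    · rw [← Finset.sdiff_union_inter B.1 A.1, hb', Finset.inter_comm, hx, Finset.union_comm]; rfl
  · rintro ⟨x, a, b, hxa, hxb, hab, hA, hB⟩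
    refine ⟨a, b, hab, ?_⟩
    rw [hA, hB]
    ext t
    simp only [Finset.mem_symmDiff, Finset.mem_insert, Finset.mem_singleton]
    have hne := hab.ne
    constructor
    · rintro (⟨h1 | h1, h2⟩ | ⟨h1 | h1, h2⟩) <;> tauto
    · rintro (rfl | rfl) <;> tauto

def edgeTokens (G : SimpleGraph V) : Set {s : Finset V // s.card = 2} :=
  {A | ∃ a b, G.Adj a b ∧ A.1 = {a, b}}

lemma adj_of_mem_edgeTokens {A : {s : Finset V // s.card = 2}} {a b : V}
    (hA : A ∈ edgeTokens G) (h : A.1 = {a, b}) : G.Adj a b :=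
  let ⟨_, _, hcd, h'⟩ := hA
  G.adj_of_pair_eq (h.symm.trans h') hcd

theorem indepSet_edgeTokens (hT : ∀ a b c, G.Adj a b → G.Adj b c → ¬ G.Adj c a) :
    IndepSet (tokenGraph G 2) (edgeTokens G) := by
  intro A hA B hB _ hAB
  obtain ⟨x, a, b, -, -, hab, hxa, hxb⟩ := tokenGraph_two_adj_iff.mp hAB
  exact hT x a b (adj_of_mem_edgeTokens hA hxa) hab (adj_of_mem_edgeTokens hB hxb).symm

def edgeTokensLeaving (G : SimpleGraph V) (P : Set V) : Set {s : Finset V // s.card = 2} :=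
  {A | ∃ x ∈ P, ∃ a ∉ P, G.Adj x a ∧ A.1 = {x, a}}

lemma edgeTokensLeaving_subset (P : Set V) : edgeTokensLeaving G P ⊆ edgeTokens G :=
  fun _ ⟨x, _, a, _, hxa, hA⟩ => ⟨x, a, hxa, hA⟩

lemma notMem_edgeTokensLeaving {P : Set V} {A : {s : Finset V // s.card = 2}}
    (hA : ∀ t ∈ A.1, t ∈ P) : A ∉ edgeTokensLeaving G P := by
  rintro ⟨x, -, a, haP, -, hxa⟩
  exact haP (hA a (by simp [hxa]))

lemma not_adj_of_mem_edgeTokensLeaving {P : Set V} {A B : {s : Finset V // s.card = 2}}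
    (hA : ∀ t ∈ A.1, t ∈ P) (hcommon : ∀ d, (∀ a ∈ A.1, G.Adj a d) → d ∈ P)
    (hB : B ∈ edgeTokensLeaving G P) : ¬ (tokenGraph G 2).Adj A B := by
  intro hAB
  obtain ⟨x, c, d, -, -, hcd, hxc, hxd⟩ := tokenGraph_two_adj_iff.mp hAB
  have hdx := adj_of_mem_edgeTokens (edgeTokensLeaving_subset P hB) hxd
  have hdP : d ∈ P := hcommon d (by simp [hxc, hdx, hcd])
  exact notMem_edgeTokensLeaving (by simp [hxd, hdP, hA x (by simp [hxc])]) hB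

lemma adj_edgeTokensLeaving_or_adj_adj {P : Set V} {q s : {s : Finset V // s.card = 2}}
    (hs : s ∈ edgeTokens G) (hsP : ∀ t ∈ s.1, t ∈ P) (hqs : (tokenGraph G 2).Adj q s) :
    (∃ r ∈ edgeTokensLeaving G P, (tokenGraph G 2).Adj q r) ∨
      ∃ t c d, t ∈ P ∧ c ∈ P ∧ d ∈ P ∧ t ≠ c ∧ G.Adj t d ∧ G.Adj c d ∧ q.1 = {t, c} := by
  obtain ⟨t, c, d, htc, htd, hcd, hq, hs'⟩ := tokenGraph_two_adj_iff.mp hqs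
  have htd' := adj_of_mem_edgeTokens hs hs'
  have htP : t ∈ P := hsP t (by simp [hs'])
  have hdP : d ∈ P := hsP d (by simp [hs'])
  by_cases hcP : c ∈ P
  · exact Or.inr ⟨t, c, d, htP, hcP, hdP, htc, htd', hcd, hq⟩
  · refine Or.inl ⟨⟨{d, c}, Finset.card_pair hcd.ne'⟩, ⟨d, hdP, c, hcP, hcd.symm, rfl⟩, ?_⟩
    exact tokenGraph_two_adj_iff.mpr
      ⟨c, t, d, htc.symm, hcd.ne, htd', by rw [hq, Finset.pair_comm], Finset.pair_comm d c⟩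

lemma mem_closedNbhd_of_adj_edgeToken {u v w : V} (huw : u ≠ w) (hnuw : ¬ G.Adj u w)
    {q s : {s : Finset V // s.card = 2}} (hs : s ∈ edgeTokens G)
    (hsP : ∀ t ∈ s.1, t ∈ ({u, v, w} : Set V)) (hqs : (tokenGraph G 2).Adj q s) :
    q ∈ closedNbhd (tokenGraph G 2)
      (insert ⟨{u, w}, Finset.card_pair huw⟩ (edgeTokensLeaving G {u, v, w})) := by
  rcases adj_edgeTokensLeaving_or_adj_adj hs hsP hqs with
    ⟨r, hr, hqr⟩ | ⟨t, c, d, ht, hc, hd, htc, htd, hcd, hq⟩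
  · exact Or.inr ⟨r, Set.mem_insert_of_mem _ hr, hqr⟩
  · exact Or.inl <| Or.inl <| Subtype.ext <|
      hq.trans (G.pair_eq_of_adj_of_adj hnuw ht hc hd htc htd hcd)

end TokenGraph

theorem not_wellCovered_tokenGraph_two {V : Type*} [Finite V] [DecidableEq V]
    {G : SimpleGraph V} {u v w : V} (hT : ∀ a b c, G.Adj a b → G.Adj b c → ¬ G.Adj c a)
    (hC : ∀ t, G.Adj u t → G.Adj w t → t = v)
    (huw : u ≠ w) (hvu : G.Adj v u) (hvw : G.Adj v w) :
    ¬ WellCovered (tokenGraph G 2) := by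
  intro hwc
  have hnuw : ¬ G.Adj u w := fun h => hT v u w hvu h hvw.symm
  let P : Set V := {u, v, w}
  let p : {s : Finset V // s.card = 2} := ⟨{u, w}, Finset.card_pair huw⟩
  let y : {s : Finset V // s.card = 2} := ⟨{u, v}, Finset.card_pair hvu.ne'⟩
  let z : {s : Finset V // s.card = 2} := ⟨{w, v}, Finset.card_pair hvw.ne'⟩
  let X := edgeTokensLeaving G P
  have hpP : ∀ t ∈ p.1, t ∈ P := by simp [p, P]
  have hyP : ∀ t ∈ y.1, t ∈ P := by simp [y, P]
  have hzP : ∀ t ∈ z.1, t ∈ P := by simp [z, P]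
  have hyE : y ∈ edgeTokens G := ⟨u, v, hvu.symm, rfl⟩
  have hzE : z ∈ edgeTokens G := ⟨w, v, hvw.symm, rfl⟩
  have hS₁ : IndepSet (tokenGraph G 2) (insert y (insert z X)) :=
    (indepSet_edgeTokens hT).mono <|
      Set.insert_subset hyE <| Set.insert_subset hzE (edgeTokensLeaving_subset P)
  have hS₂ : IndepSet (tokenGraph G 2) (insert p X) := by
    have hp : ∀ B ∈ X, ¬ (tokenGraph G 2).Adj p B := fun B =>
      not_adj_of_mem_edgeTokensLeaving hpP fun d hd => by
        simp [P, hC d (hd u (by simp [p])) (hd w (by simp [p]))]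
    exact Set.pairwise_insert.mpr ⟨(indepSet_edgeTokens hT).mono (edgeTokensLeaving_subset P),
      fun B hB _ => ⟨hp B hB, fun h => hp B hB h.symm⟩⟩
  have hN : closedNbhd (tokenGraph G 2) (insert y (insert z X)) ⊆
      closedNbhd (tokenGraph G 2) (insert p X) := by
    rintro q (hq | ⟨s, hs, hqs⟩)
    · rcases hq with rfl | rfl | hq
      · exact Or.inr ⟨p, Set.mem_insert _ _,
          tokenGraph_two_adj_iff.mpr ⟨u, v, w, hvu.ne', huw, hvw, rfl, rfl⟩⟩
      · exact Or.inr ⟨p, Set.mem_insert _ _, tokenGraph_two_adj_iff.mpr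
          ⟨w, v, u, hvw.ne', huw.symm, hvu, rfl, Finset.pair_comm u w⟩⟩
      · exact Or.inl (Set.mem_insert_of_mem _ hq)
    · rcases hs with rfl | rfl | hs
      · exact mem_closedNbhd_of_adj_edgeToken huw hnuw hyE hyP hqs
      · exact mem_closedNbhd_of_adj_edgeToken huw hnuw hzE hzP hqs
      · exact Or.inr ⟨s, Set.mem_insert_of_mem _ hs, hqs⟩
  have hcard : (insert p X).ncard < (insert y (insert z X)).ncard := by
    have hyz : y ≠ z := fun h => by
      rcases Finset.pair_eq_pair_iff.mp (congrArg Subtype.val h) with ⟨h, -⟩ | ⟨h, -⟩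
      exacts [huw h, hvu.ne' h]
    rw [Set.ncard_insert_of_notMem (notMem_edgeTokensLeaving hpP),
      Set.ncard_insert_of_notMem fun h => h.elim hyz (notMem_edgeTokensLeaving hyP),
      Set.ncard_insert_of_notMem (notMem_edgeTokensLeaving hzP)]
    omega
  exact (hcard.trans_le (hwc.ncard_le_of_closedNbhd_subset hS₁ hS₂ hN)).false

theorem stmt16 {V : Type*} [Fintype V] [DecidableEq V] (G : SimpleGraph V)
    (hG : G.Connected) (hn : 3 ≤ Fintype.card V)
    (hwc : WellCovered (tokenGraph G 2)) :
    G.egirth ≤ 4 := by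
  by_contra hgirth
  have hT : ∀ a b c, G.Adj a b → G.Adj b c → ¬ G.Adj c a := fun _ _ _ hab hbc hca =>
    hgirth ((SimpleGraph.egirth_le_three hab hbc hca).trans (by norm_num))
  obtain ⟨v, u, w, huw, hvu, hvw⟩ := hG.exists_adj_adj_of_three_le_card hn
  have hC : ∀ t, G.Adj u t → G.Adj w t → t = v := fun _ hut hwt =>
    by_contra fun htv => hgirth (SimpleGraph.egirth_le_four hut hwt.symm hvw.symm hvu huw htv)
  exact not_wellCovered_tokenGraph_two hT hC huw hvu hvw hwc
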